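/- Let V be a finite-dimensional complex normed vector space, let σ: V → V be a linear map with σ² = id_V, let ν ∈ ℂ, and let f: ℂ∖ℝ → V be holomorphic. Then the following are equivalent: (1) the function z ↦ f(z) − z^{−2ν−1}·σ(f(−1/z)), defined on ℂ∖ℝ, extends to a holomorphic function on ℂ∖(−∞,0]; (2) there exist an open set U ⊆ ℂ with ℝ∖{0} ⊆ U and U ∩ iℝ = ∅, and a holomorphic function q: U → V, such that (1+z^{−2})^{ν+1/2}·f(−1/z) = (1+z²)^{ν+1/2}·σ(f(z)) + q(z) for all z ∈ U∖ℝ. -/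

import Mathlib

/-!
Put `s = ν + 1/2`, `G z = f z - z^(-2s) • σ (f (-1/z))` and
`H z = (1 + z⁻²)^s • f (-1/z) - (1 + z²)^s • σ (f z)`. On the right half-plane the principal
branches satisfy `(1 + z⁻²)^s = (1 + z²)^s z^(-2s)`, whence `H = -(1 + z²)^s • σ G` there
(using `σ² = 1`); since `H (-1/z) = -σ (H z)`, on the left half-plane `H z = (1 + z⁻²)^s • G (-1/z)`.
So a holomorphic extension of `G` across `(0, ∞)` makes `H` holomorphic on `{Re z ≠ 0}`, and
conversely `G = -(1 + z²)^(-s) • σ q` near `(0, ∞)` extends `G` across the positive axis.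
-/

open Complex

namespace Complex

lemma neg_one_div_re (z : ℂ) : (-1 / z).re = -z.re / normSq z := by
  rw [neg_div, one_div, neg_re, inv_re, neg_div]

lemma neg_one_div_im (z : ℂ) : (-1 / z).im = z.im / normSq z := by
  rw [neg_div, one_div, neg_im, inv_im, neg_div, neg_neg]

lemma neg_one_div_im_ne_zero {z : ℂ} (hz : z.im ≠ 0) : (-1 / z).im ≠ 0 := by
  rw [neg_one_div_im]
  exact div_ne_zero hz (normSq_pos.2 fun h => hz (by simp [h])).ne'

lemma neg_one_div_re_pos {z : ℂ} (hz : z.re < 0) : 0 < (-1 / z).re := by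
  rw [neg_one_div_re]
  exact div_pos (neg_pos.2 hz) (normSq_pos.2 fun h => hz.ne (by simp [h]))

lemma one_add_sq_im (z : ℂ) : (1 + z ^ 2).im = 2 * z.re * z.im := by
  simp [sq]; ring

lemma one_add_sq_mem_slitPlane {z : ℂ} (hz : z.re ≠ 0) : 1 + z ^ 2 ∈ slitPlane := by
  have hre : (1 + z ^ 2).re = 1 + z.re ^ 2 - z.im ^ 2 := by simp [sq]; ring
  rcases eq_or_ne z.im 0 with h | h
  · exact Or.inl (by rw [hre, h]; nlinarith [sq_nonneg z.re])
  · exact Or.inr (by rw [one_add_sq_im]; exact mul_ne_zero (mul_ne_zero two_ne_zero hz) h)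

/-- On the right half-plane `arg (1 + z²)` and `2 arg z` have the same sign, so
`log (1 + z⁻²) = log (1 + z²) - 2 log z` holds without a `2πi` correction. -/
lemma one_add_inv_sq_cpow {z : ℂ} (hz : 0 < z.re) (s : ℂ) :
    (1 + z⁻¹ ^ 2) ^ s = (1 + z ^ 2) ^ s * z ^ (-(2 * s)) := by
  have hz0 : z ≠ 0 := fun h => hz.ne' (by simp [h])
  have h1 : 1 + z ^ 2 ≠ 0 := slitPlane_ne_zero (one_add_sq_mem_slitPlane hz.ne')
  have harg := abs_lt.1 (abs_arg_lt_pi_div_two_iff.2 (Or.inl hz))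
  have hbound : -Real.pi < (log (1 + z ^ 2) - 2 * log z).im ∧
      (log (1 + z ^ 2) - 2 * log z).im ≤ Real.pi := by
    simp only [sub_im, log_im, mul_im, re_ofNat, im_ofNat, log_re, zero_mul, add_zero]
    rcases le_or_gt 0 z.im with h | h
    · have := arg_nonneg_iff.2 (show (0 : ℝ) ≤ (1 + z ^ 2).im by rw [one_add_sq_im]; positivity)
      have := arg_nonneg_iff.2 h
      constructor <;> linarith [arg_le_pi (1 + z ^ 2)]
    · have := arg_neg_iff.2 (show (1 + z ^ 2).im < (0 : ℝ) by rw [one_add_sq_im]; nlinarith)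
      have := arg_neg_iff.2 h
      constructor <;> linarith [neg_pi_lt_arg (1 + z ^ 2)]
  have hexp : exp (log (1 + z ^ 2) - 2 * log z) = 1 + z⁻¹ ^ 2 := by
    rw [exp_sub, exp_log h1, two_mul, exp_add, exp_log hz0]
    field_simp
    ring
  rw [← hexp, cpow_def_of_ne_zero (exp_ne_zero _), log_exp hbound.1 hbound.2,
    cpow_def_of_ne_zero h1, cpow_def_of_ne_zero hz0, ← exp_add]
  ring_nf

end Complex

lemma differentiableOn_one_add_sq_cpow (s : ℂ) :
    DifferentiableOn ℂ (fun z : ℂ => (1 + z ^ 2) ^ s) {z | z.re ≠ 0} := fun z hz =>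
  (DifferentiableAt.cpow (f := fun z : ℂ => 1 + z ^ 2) (by fun_prop) (differentiableAt_const s)
    (one_add_sq_mem_slitPlane hz)).differentiableWithinAt

lemma differentiableOn_one_add_inv_sq_cpow (s : ℂ) :
    DifferentiableOn ℂ (fun z : ℂ => (1 + z⁻¹ ^ 2) ^ s) {z | z.re ≠ 0} := by
  refine (differentiableOn_one_add_sq_cpow s).comp (differentiableOn_inv.mono ?_) ?_
  · exact fun z hz h => hz (by simp [h])
  · intro z hz
    simp only [Set.mem_ofPred_eq, inv_re]
    exact div_ne_zero hz (normSq_pos.2 fun h => hz (by simp [h])).ne'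

lemma DifferentiableOn.comp_neg_one_div {V : Type*} [NormedAddCommGroup V] [NormedSpace ℂ V]
    {g : ℂ → V} {s t : Set ℂ} (hg : DifferentiableOn ℂ g t) (hs : ∀ z ∈ s, z ≠ 0)
    (hst : Set.MapsTo (fun z => -1 / z) s t) :
    DifferentiableOn ℂ (fun z => g (-1 / z)) s :=
  hg.comp (fun z hz => ((differentiableAt_const _).div differentiableAt_id
    (hs z hz)).differentiableWithinAt) hst

section Gluing

variable {V : Type*} [NormedAddCommGroup V] [NormedSpace ℂ V]
  (σ : V →ₗ[ℂ] V) (s : ℂ) (f : ℂ → V)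

/-- With `s = ν + 1/2`, `gluing` is the function of condition (1) and `hyperfunctionDefect` the
difference of the two sides of the identity in condition (2). -/
noncomputable def gluing (z : ℂ) : V := f z - z ^ (-(2 * s)) • σ (f (-1 / z))

noncomputable def hyperfunctionDefect (z : ℂ) : V :=
  (1 + z⁻¹ ^ 2) ^ s • f (-1 / z) - (1 + z ^ 2) ^ s • σ (f z)

variable {σ}

lemma hyperfunctionDefect_neg_one_div (hσ : ∀ v, σ (σ v) = v) (z : ℂ) :
    hyperfunctionDefect σ s f (-1 / z) = -σ (hyperfunctionDefect σ s f z) := by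
  have h1 : -1 / (-1 / z) = z := by field_simp
  have h2 : (-1 / z)⁻¹ ^ 2 = z ^ 2 := by rw [neg_div, one_div, inv_neg, inv_inv, neg_sq]
  have h3 : (-1 / z) ^ 2 = z⁻¹ ^ 2 := by rw [neg_div, one_div, neg_sq]
  simp only [hyperfunctionDefect, h1, h2, h3, map_sub, map_smul, hσ, neg_sub]

lemma hyperfunctionDefect_of_re_pos (hσ : ∀ v, σ (σ v) = v) {z : ℂ} (hz : 0 < z.re) :
    hyperfunctionDefect σ s f z = -((1 + z ^ 2) ^ s • σ (gluing σ s f z)) := by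
  simp only [hyperfunctionDefect, gluing, map_sub, map_smul, hσ, one_add_inv_sq_cpow hz,
    smul_sub, mul_smul, neg_sub]

lemma hyperfunctionDefect_of_re_neg (hσ : ∀ v, σ (σ v) = v) {z : ℂ} (hz : z.re < 0) :
    hyperfunctionDefect σ s f z = (1 + z⁻¹ ^ 2) ^ s • gluing σ s f (-1 / z) := by
  have h := hyperfunctionDefect_neg_one_div s f hσ (-1 / z)
  rw [show -1 / (-1 / z) = z by field_simp,
    hyperfunctionDefect_of_re_pos s f hσ (neg_one_div_re_pos hz)] at h
  rw [h, map_neg, map_smul, hσ, neg_neg, neg_div, one_div, neg_sq]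

variable [FiniteDimensional ℂ V]

lemma differentiableOn_gluing (hf : DifferentiableOn ℂ f {z | z.im ≠ 0}) :
    DifferentiableOn ℂ (gluing σ s f) {z | z.im ≠ 0} := by
  have hne : ∀ z ∈ {z : ℂ | z.im ≠ 0}, z ≠ 0 := fun z hz h => hz (by simp [h])
  refine hf.sub (DifferentiableOn.smul (fun z hz => ?_) ?_)
  · exact (differentiableAt_id.cpow (differentiableAt_const _)
      (Or.inr hz)).differentiableWithinAt
  · exact (LinearMap.toContinuousLinearMap σ).differentiable.comp_differentiableOn
      (hf.comp_neg_one_div hne fun z hz => neg_one_div_im_ne_zero hz)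

lemma exists_hyperfunctionDefect_eq_of_gluing (hσ : ∀ v, σ (σ v) = v) {g : ℂ → V}
    (hg : DifferentiableOn ℂ g slitPlane) (hgf : ∀ z : ℂ, z.im ≠ 0 → g z = gluing σ s f z) :
    ∃ q : ℂ → V, DifferentiableOn ℂ q {z | z.re ≠ 0} ∧
      ∀ z : ℂ, z.re ≠ 0 → z.im ≠ 0 → hyperfunctionDefect σ s f z = q z := by
  refine ⟨fun z => if 0 < z.re then -((1 + z ^ 2) ^ s • σ (g z))
    else (1 + z⁻¹ ^ 2) ^ s • g (-1 / z), ?_, fun z hre him => ?_⟩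
  · have hσc := (LinearMap.toContinuousLinearMap σ).differentiable
    have hsplit : {z : ℂ | z.re ≠ 0} = {z | z.re < 0} ∪ {z | 0 < z.re} :=
      Set.ext fun z => ne_iff_lt_or_gt
    rw [hsplit]
    refine DifferentiableOn.union_of_isOpen ?_ ?_ (isOpen_lt continuous_re continuous_const)
      (isOpen_lt continuous_const continuous_re)
    · refine (((differentiableOn_one_add_inv_sq_cpow s).mono fun z hz => ne_of_lt hz).smul
        (hg.comp_neg_one_div (fun z hz h => ?_) fun z hz => ?_)).congr fun z hz => if_neg ?_
      · exact (show z.re < 0 from hz).ne (by simp [h])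
      · exact Or.inl (neg_one_div_re_pos hz)
      · exact not_lt_of_gt hz
    · exact ((((differentiableOn_one_add_sq_cpow s).mono fun z hz => ne_of_gt hz).smul
        (hσc.comp_differentiableOn (hg.mono fun z hz => Or.inl hz))).neg).congr
        fun z hz => if_pos hz
  · dsimp only
    rcases lt_or_gt_of_ne hre with hneg | hpos
    · rw [if_neg (not_lt_of_gt hneg), hyperfunctionDefect_of_re_neg s f hσ hneg,
        hgf _ (neg_one_div_im_ne_zero him)]
    · rw [if_pos hpos, hyperfunctionDefect_of_re_pos s f hσ hpos, hgf z him]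

lemma exists_gluing_eq_of_hyperfunctionDefect (hσ : ∀ v, σ (σ v) = v)
    (hf : DifferentiableOn ℂ f {z | z.im ≠ 0}) {U : Set ℂ} (hU : IsOpen U)
    (hUreal : {z : ℂ | z.im = 0 ∧ z.re ≠ 0} ⊆ U) {q : ℂ → V} (hq : DifferentiableOn ℂ q U)
    (hqf : ∀ z ∈ U, z.im ≠ 0 → hyperfunctionDefect σ s f z = q z) :
    ∃ g : ℂ → V, DifferentiableOn ℂ g slitPlane ∧
      ∀ z : ℂ, z.im ≠ 0 → g z = gluing σ s f z := by
  have hglue : ∀ z ∈ U ∩ {z | 0 < z.re}, z.im ≠ 0 →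
      gluing σ s f z = -((1 + z ^ 2) ^ (-s) • σ (q z)) := by
    rintro z ⟨hzU, hre⟩ him
    have hc : (1 + z ^ 2) ^ s ≠ 0 := fun h =>
      slitPlane_ne_zero (one_add_sq_mem_slitPlane hre.ne') ((cpow_eq_zero_iff _ _).1 h).1
    rw [← hqf z hzU him, hyperfunctionDefect_of_re_pos s f hσ hre, map_neg, map_smul, hσ,
      cpow_neg, smul_neg, neg_neg, inv_smul_smul₀ hc]
  refine ⟨fun z => if z.im ≠ 0 then gluing σ s f z else -((1 + z ^ 2) ^ (-s) • σ (q z)),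
    ?_, fun z hz => if_pos hz⟩
  have hcover : slitPlane ⊆ {z : ℂ | z.im ≠ 0} ∪ U ∩ {z | 0 < z.re} := by
    intro z hz
    by_cases him : z.im = 0
    · have hre : 0 < z.re := (mem_slitPlane_iff.1 hz).resolve_right (not_not.2 him)
      exact Or.inr ⟨hUreal ⟨him, hre.ne'⟩, hre⟩
    · exact Or.inl him
  refine (DifferentiableOn.union_of_isOpen ?_ ?_ (isOpen_ne_fun continuous_im continuous_const)
    (hU.inter (isOpen_lt continuous_const continuous_re))).mono hcover
  · exact (differentiableOn_gluing s f hf).congr fun z hz => if_pos hz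
  · refine ((((differentiableOn_one_add_sq_cpow (-s)).mono fun z hz => ne_of_gt hz.2).smul
      ((LinearMap.toContinuousLinearMap σ).differentiable.comp_differentiableOn
        (hq.mono Set.inter_subset_left))).neg).congr fun z hz => ?_
    by_cases him : z.im ≠ 0
    · exact (if_pos him).trans (hglue z hz him)
    · exact if_neg him

end Gluing

theorem stmt7 {V : Type*} [NormedAddCommGroup V] [NormedSpace ℂ V]
    [FiniteDimensional ℂ V]
    (σ : V →ₗ[ℂ] V) (hσ : σ ∘ₗ σ = LinearMap.id) (ν : ℂ)
    (f : ℂ → V) (hf : DifferentiableOn ℂ f {z : ℂ | z.im ≠ 0}) :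
    (∃ g : ℂ → V, DifferentiableOn ℂ g Complex.slitPlane ∧
        ∀ z : ℂ, z.im ≠ 0 →
          g z = f z - (z ^ (-2 * ν - 1)) • σ (f (-1 / z))) ↔
    (∃ U : Set ℂ, IsOpen U ∧ {z : ℂ | z.im = 0 ∧ z.re ≠ 0} ⊆ U ∧
        (∀ z ∈ U, z.re ≠ 0) ∧
        ∃ q : ℂ → V, DifferentiableOn ℂ q U ∧
          ∀ z ∈ U, z.im ≠ 0 →
            ((1 + (z⁻¹) ^ 2) ^ (ν + 1 / 2)) • f (-1 / z) =
              ((1 + z ^ 2) ^ (ν + 1 / 2)) • σ (f z) + q z) := by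
  have hσσ : ∀ v, σ (σ v) = v := LinearMap.congr_fun hσ
  rw [show -2 * ν - 1 = -(2 * (ν + 1 / 2)) by ring]
  constructor
  · rintro ⟨g, hg, hgf⟩
    obtain ⟨q, hq, hqf⟩ := exists_hyperfunctionDefect_eq_of_gluing (ν + 1 / 2) f hσσ hg hgf
    refine ⟨{z | z.re ≠ 0}, isOpen_ne_fun continuous_re continuous_const, fun z hz => hz.2,
      fun z hz => hz, q, hq, fun z hz him => ?_⟩
    rw [← hqf z hz him, hyperfunctionDefect, add_sub_cancel]
  · rintro ⟨U, hU, hUreal, -, q, hq, hqf⟩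
    exact exists_gluing_eq_of_hyperfunctionDefect (ν + 1 / 2) f hσσ hf hU hUreal hq
      fun z hz him => sub_eq_of_eq_add' (hqf z hz him)
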